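/- Fix ω ∈ (-1,1) and let θ^b ∈ ℓ²(ℤ,ℝ) be given by θ^b_0 = arccos ω, θ^b_i = 0 for i ≠ 0. The partial derivative at (θ^b, 0) of F (with respect to the ℓ² variable), where [F(θ,α)]_i = (cos θ_i - ω) sin θ_i - α·Δ_i(θ), is the diagonal operator sending δθ to the sequence with i-th entry (1-ω)δθ_i for i ≠ 0 and -(1-ω²)δθ_0 for i = 0; this operator is a Banach space isomorphism of ℓ². -/

import Mathlib

open scoped ENNReal
set_option maxHeartbeats 1000000


open Real

namespace BreatherAux

open scoped ENNReal

private lemma hp2 : 0 < (2 : ℝ≥0∞).toReal := by norm_num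

lemma memℓp_dom {f g : ℤ → ℝ} (hg : Memℓp g 2) (h : ∀ i, |f i| ≤ |g i|) : Memℓp f 2 := by
  apply memℓp_gen
  refine Summable.of_nonneg_of_le (fun i => ?_) (fun i => ?_) (hg.summable hp2)
  · positivity
  · exact Real.rpow_le_rpow (norm_nonneg _)
      (by simpa [Real.norm_eq_abs] using h i) hp2.le

lemma norm_mono (f g : lp (fun _ : ℤ => ℝ) 2)
    (h : ∀ i, |(f : ℤ → ℝ) i| ≤ |(g : ℤ → ℝ) i|) : ‖f‖ ≤ ‖g‖ := by
  rw [← Real.rpow_le_rpow_iff (norm_nonneg _) (norm_nonneg _) hp2,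
    lp.norm_rpow_eq_tsum hp2, lp.norm_rpow_eq_tsum hp2]
  exact Summable.tsum_le_tsum
    (fun i => Real.rpow_le_rpow (norm_nonneg _)
      (by simpa [Real.norm_eq_abs] using h i) hp2.le)
    ((lp.memℓp f).summable hp2) ((lp.memℓp g).summable hp2)

lemma diag_mem (d : ℤ → ℝ) (C : ℝ) (hC : 0 ≤ C) (hd : ∀ i, |d i| ≤ C)
    (f : lp (fun _ : ℤ => ℝ) 2) : Memℓp (fun i => d i * (f : ℤ → ℝ) i) 2 := by
  refine memℓp_dom ((lp.memℓp f).const_mul C) (fun i => ?_)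
  rw [abs_mul, abs_mul, abs_of_nonneg hC]
  exact mul_le_mul_of_nonneg_right (hd i) (abs_nonneg _)

noncomputable def diag (d : ℤ → ℝ) (C : ℝ) (hC : 0 ≤ C) (hd : ∀ i, |d i| ≤ C) :
    lp (fun _ : ℤ => ℝ) 2 →L[ℝ] lp (fun _ : ℤ => ℝ) 2 :=
  LinearMap.mkContinuous
    { toFun := fun f => ⟨fun i => d i * (f : ℤ → ℝ) i, diag_mem d C hC hd f⟩
      map_add' := fun f g => by
        apply Subtype.ext
        funext i
        simp only [lp.coeFn_add, Pi.add_apply]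
        show d i * ((f : ℤ → ℝ) i + (g : ℤ → ℝ) i)
            = d i * (f : ℤ → ℝ) i + d i * (g : ℤ → ℝ) i
        ring
      map_smul' := fun c f => by
        apply Subtype.ext
        funext i
        simp only [lp.coeFn_smul, Pi.smul_apply, RingHom.id_apply, smul_eq_mul]
        show d i * (c * (f : ℤ → ℝ) i) = c * (d i * (f : ℤ → ℝ) i)
        ring }
    C
    (fun f => by
      have h1 : ‖(⟨fun i => d i * (f : ℤ → ℝ) i, diag_mem d C hC hd f⟩ :
          lp (fun _ : ℤ => ℝ) 2)‖ ≤ ‖C • f‖ := by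
        refine norm_mono _ _ (fun i => ?_)
        have : ((C • f : lp (fun _ : ℤ => ℝ) 2) : ℤ → ℝ) i = C * (f : ℤ → ℝ) i := by
          simp [lp.coeFn_smul]
        rw [this, abs_mul, abs_mul, abs_of_nonneg hC]
        exact mul_le_mul_of_nonneg_right (hd i) (abs_nonneg _)
      calc _ ≤ ‖C • f‖ := h1
        _ = C * ‖f‖ := by rw [norm_smul, Real.norm_eq_abs, abs_of_nonneg hC])

@[simp] lemma diag_apply (d : ℤ → ℝ) (C : ℝ) (hC : 0 ≤ C) (hd : ∀ i, |d i| ≤ C)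
    (f : lp (fun _ : ℤ => ℝ) 2) (i : ℤ) :
    ((diag d C hC hd f : lp (fun _ : ℤ => ℝ) 2) : ℤ → ℝ) i = d i * (f : ℤ → ℝ) i := rfl

lemma lip_of_deriv (f f' : ℝ → ℝ) (K : ℝ)
    (hf : ∀ x, HasDerivAt f (f' x) x) (hb : ∀ x, |f' x| ≤ K) (a b : ℝ) :
    |f a - f b| ≤ K * |a - b| := by
  simpa [Real.norm_eq_abs] using
    Convex.norm_image_sub_le_of_norm_hasDerivWithin_le (s := (Set.univ : Set ℝ))
      (fun x _ => (hf x).hasDerivWithinAt)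
      (fun x _ => by simpa [Real.norm_eq_abs] using hb x)
      convex_univ (Set.mem_univ b) (Set.mem_univ a)

lemma taylor_bound (g g' : ℝ → ℝ) (K : ℝ) (hK : 0 ≤ K)
    (hg : ∀ x, HasDerivAt g (g' x) x)
    (hlip : ∀ a b, |g' a - g' b| ≤ K * |a - b|) (x y : ℝ) :
    |g x - g y - g' y * (x - y)| ≤ K * (x - y) ^ 2 := by
  have hseg : ∀ t ∈ segment ℝ y x, |t - y| ≤ |x - y| := by
    rintro t ⟨a, b, ha, hb, hab, rfl⟩
    have h1 : a • y + b • x - y = b * (x - y) := by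
      have : a = 1 - b := by linarith
      subst this; simp [smul_eq_mul]; ring
    rw [h1, abs_mul]
    have := abs_nonneg (x - y)
    nlinarith [abs_of_nonneg hb]
  have key := Convex.norm_image_sub_le_of_norm_hasDerivWithin_le
    (f := fun t => g t - g' y * t) (f' := fun t => g' t - g' y)
    (s := segment ℝ y x)
    (fun t _ => (((hg t).sub (by simpa using (hasDerivAt_id t).const_mul (g' y)))).hasDerivWithinAt)
    (fun t ht => by
      have h2 := (hlip t y).trans (mul_le_mul_of_nonneg_left (hseg t ht) hK)
      simpa [Real.norm_eq_abs] using h2)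
    (convex_segment y x) (left_mem_segment ℝ y x) (right_mem_segment ℝ y x)
  have h3 : (g x - g' y * x) - (g y - g' y * y) = g x - g y - g' y * (x - y) := by ring
  have h4 : |x - y| * |x - y| = (x - y) ^ 2 := by
    rw [← abs_mul, ← sq, abs_of_nonneg (sq_nonneg _)]
  calc |g x - g y - g' y * (x - y)|
      = ‖(g x - g' y * x) - (g y - g' y * y)‖ := by rw [Real.norm_eq_abs, h3]
    _ ≤ K * |x - y| * ‖x - y‖ := key
    _ = K * (x - y) ^ 2 := by rw [Real.norm_eq_abs, mul_assoc, h4]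

end BreatherAux

open BreatherAux

theorem breather_map_derivative_isomorphism (ω : ℝ) (hω : ω ∈ Set.Ioo (-1:ℝ) 1)
    (θb : lp (fun _ : ℤ => ℝ) 2)
    (hθb : (θb : ℤ → ℝ) 0 = Real.arccos ω ∧ ∀ i : ℤ, i ≠ 0 → (θb : ℤ → ℝ) i = 0) :
    ∃ L : lp (fun _ : ℤ => ℝ) 2 ≃L[ℝ] lp (fun _ : ℤ => ℝ) 2,
      (∀ (δθ : lp (fun _ : ℤ => ℝ) 2) (i : ℤ),
        (L δθ : ℤ → ℝ) i
          = if i = 0 then -(1 - ω^2) * (δθ : ℤ → ℝ) 0 else (1 - ω) * (δθ : ℤ → ℝ) i) ∧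
      ∀ F : lp (fun _ : ℤ => ℝ) 2 × ℝ → lp (fun _ : ℤ => ℝ) 2,
        (∀ (θ : lp (fun _ : ℤ => ℝ) 2) (α : ℝ) (i : ℤ),
          (F (θ, α) : ℤ → ℝ) i
            = (Real.cos (θ i) - ω) * Real.sin (θ i)
              - α * (Real.cos (θ i) * (Real.sin (θ (i+1)) + Real.sin (θ (i-1)))
                - Real.sin (θ i) * (Real.cos (θ (i+1)) + Real.cos (θ (i-1))))) →
        HasFDerivAt (fun θ => F (θ, 0)) (L : lp (fun _ : ℤ => ℝ) 2 →L[ℝ] lp (fun _ : ℤ => ℝ) 2) θb := by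
  obtain ⟨hω1, hω2⟩ := hω
  -- the diagonal multiplier
  set d : ℤ → ℝ := fun i => if i = 0 then -(1 - ω ^ 2) else (1 - ω) with hd_def
  have hω2' : 0 < 1 - ω := by linarith
  have hωsq : 0 < 1 - ω ^ 2 := by nlinarith
  have hd_ne : ∀ i, d i ≠ 0 := by
    intro i; simp only [hd_def]; split_ifs
    · intro h; nlinarith
    · intro h; nlinarith
  have hd_bd : ∀ i, |d i| ≤ 2 := by
    intro i; simp only [hd_def]; split_ifs
    · rw [abs_neg, abs_of_nonneg hωsq.le]; nlinarith
    · rw [abs_of_nonneg hω2'.le]; linarith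
  set m : ℝ := min (1 - ω ^ 2) (1 - ω) with hm_def
  have hm_pos : 0 < m := lt_min hωsq hω2'
  have hd_lb : ∀ i, m ≤ |d i| := by
    intro i; simp only [hd_def]; split_ifs
    · rw [abs_neg, abs_of_nonneg hωsq.le]; exact min_le_left _ _
    · rw [abs_of_nonneg hω2'.le]; exact min_le_right _ _
  have hdinv_bd : ∀ i, |(d i)⁻¹| ≤ m⁻¹ := by
    intro i
    rw [abs_inv]
    exact inv_anti₀ hm_pos (hd_lb i)
  set T := diag d 2 (by norm_num) hd_bd with hT_def
  set Tinv := diag (fun i => (d i)⁻¹) m⁻¹ (inv_nonneg.2 hm_pos.le) hdinv_bd with hTinv_def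
  have hTT : ∀ f : lp (fun _ : ℤ => ℝ) 2, T (Tinv f) = f := by
    intro f
    apply Subtype.ext
    funext i
    exact mul_inv_cancel_left₀ (hd_ne i) _
  have hTT' : ∀ f : lp (fun _ : ℤ => ℝ) 2, Tinv (T f) = f := by
    intro f
    apply Subtype.ext
    funext i
    exact inv_mul_cancel_left₀ (hd_ne i) _
  set L : lp (fun _ : ℤ => ℝ) 2 ≃L[ℝ] lp (fun _ : ℤ => ℝ) 2 :=
    { toLinearEquiv := LinearEquiv.ofLinear T.toLinearMap Tinv.toLinearMap
        (LinearMap.ext fun f => hTT f) (LinearMap.ext fun f => hTT' f)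
      continuous_toFun := T.continuous
      continuous_invFun := Tinv.continuous } with hL_def
  have hL_apply : ∀ (δθ : lp (fun _ : ℤ => ℝ) 2) (i : ℤ),
      (L δθ : ℤ → ℝ) i = d i * (δθ : ℤ → ℝ) i := fun δθ i => rfl
  refine ⟨L, fun δθ i => ?_, ?_⟩
  · rw [hL_apply]
    simp only [hd_def]
    split_ifs with h
    · subst h; ring
    · ring
  · intro F hF
    -- scalar function and its derivative
    set g : ℝ → ℝ := fun x => (Real.cos x - ω) * Real.sin x with hg_def
    set g' : ℝ → ℝ := fun x => Real.cos x ^ 2 - Real.sin x ^ 2 - ω * Real.cos x with hg'_def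
    set g'' : ℝ → ℝ := fun x => -(4 * Real.sin x * Real.cos x) + ω * Real.sin x with hg''_def
    have hg : ∀ x, HasDerivAt g (g' x) x := by
      intro x
      have h := ((Real.hasDerivAt_cos x).sub_const ω).mul (Real.hasDerivAt_sin x)
      refine h.congr_deriv ?_
      simp only [hg'_def]; ring
    have hg' : ∀ x, HasDerivAt g' (g'' x) x := by
      intro x
      have h1 := (Real.hasDerivAt_cos x).pow 2
      have h2 := (Real.hasDerivAt_sin x).pow 2
      have h := (h1.sub h2).sub ((Real.hasDerivAt_cos x).const_mul ω)
      refine h.congr_deriv ?_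
      simp only [hg''_def]; ring
    have hg''_bd : ∀ x, |g'' x| ≤ 5 := by
      intro x
      simp only [hg''_def]
      have hs := Real.neg_one_le_sin x
      have hs' := Real.sin_le_one x
      have hc := Real.neg_one_le_cos x
      have hc' := Real.cos_le_one x
      have hω' : |ω| ≤ 1 := abs_le.2 ⟨hω1.le, hω2.le⟩
      rw [abs_le]
      constructor <;> nlinarith [abs_le.1 hω', sq_nonneg (Real.sin x), sq_nonneg (Real.cos x)]
    have hlip : ∀ a b, |g' a - g' b| ≤ 5 * |a - b| :=
      lip_of_deriv g' g'' 5 hg' hg''_bd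
    have htaylor : ∀ x y, |g x - g y - g' y * (x - y)| ≤ 5 * (x - y) ^ 2 :=
      taylor_bound g g' 5 (by norm_num) hg hlip
    -- d i = g' (θb i)
    have hd_eq : ∀ i, d i = g' ((θb : ℤ → ℝ) i) := by
      intro i
      simp only [hd_def, hg'_def]
      split_ifs with h
      · subst h
        rw [hθb.1, Real.cos_arccos hω1.le hω2.le, Real.sin_arccos,
          Real.sq_sqrt (by nlinarith : (0:ℝ) ≤ 1 - ω ^ 2)]
        ring
      · rw [hθb.2 i h]
        simp
    -- coordinate formula for F at α = 0
    have hF0 : ∀ (θ : lp (fun _ : ℤ => ℝ) 2) (i : ℤ),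
        (F (θ, 0) : ℤ → ℝ) i = g ((θ : ℤ → ℝ) i) := by
      intro θ i
      rw [hF θ 0 i]
      simp [hg_def]
    -- key estimate
    have hkey : ∀ θ : lp (fun _ : ℤ => ℝ) 2,
        ‖F (θ, 0) - F (θb, 0) - (L : lp (fun _ : ℤ => ℝ) 2 →L[ℝ] lp (fun _ : ℤ => ℝ) 2) (θ - θb)‖
          ≤ 5 * ‖θ - θb‖ * ‖θ - θb‖ := by
      intro θ
      set R := F (θ, 0) - F (θb, 0) -
        (L : lp (fun _ : ℤ => ℝ) 2 →L[ℝ] lp (fun _ : ℤ => ℝ) 2) (θ - θb) with hR_def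
      set δ := θ - θb with hδ_def
      have hRcoord : ∀ i, (R : ℤ → ℝ) i
          = g ((θ : ℤ → ℝ) i) - g ((θb : ℤ → ℝ) i)
            - g' ((θb : ℤ → ℝ) i) * ((θ : ℤ → ℝ) i - (θb : ℤ → ℝ) i) := by
        intro i
        have hδi : (δ : ℤ → ℝ) i = (θ : ℤ → ℝ) i - (θb : ℤ → ℝ) i := by
          simp [hδ_def, lp.coeFn_sub]
        have hLδ : ((L δ : lp (fun _ : ℤ => ℝ) 2) : ℤ → ℝ) i = d i * (δ : ℤ → ℝ) i :=
          hL_apply δ i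
        simp only [hR_def, lp.coeFn_sub, Pi.sub_apply, hF0, ContinuousLinearEquiv.coe_coe]
        rw [hLδ, hδi, hd_eq i]
      have hδbd : ∀ i, |(δ : ℤ → ℝ) i| ≤ ‖δ‖ := by
        intro i
        simpa [Real.norm_eq_abs] using
          lp.norm_apply_le_norm (by norm_num : (2 : ℝ≥0∞) ≠ 0) δ i
      have hRbd : ∀ i, |(R : ℤ → ℝ) i| ≤ |((((5 * ‖δ‖) • δ) : lp (fun _ : ℤ => ℝ) 2) : ℤ → ℝ) i| := by
        intro i
        have h1 : (θ : ℤ → ℝ) i - (θb : ℤ → ℝ) i = (δ : ℤ → ℝ) i := by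
          simp [hδ_def, lp.coeFn_sub]
        have h2 := htaylor ((θ : ℤ → ℝ) i) ((θb : ℤ → ℝ) i)
        rw [h1] at h2
        have h4 : ((((5 * ‖δ‖) • δ) : lp (fun _ : ℤ => ℝ) 2) : ℤ → ℝ) i
            = (5 * ‖δ‖) * (δ : ℤ → ℝ) i := by
          rw [lp.coeFn_smul]; rfl
        rw [hRcoord i, h1, h4, abs_mul,
          abs_of_nonneg (by positivity : (0:ℝ) ≤ 5 * ‖δ‖)]
        refine h2.trans ?_
        have h5 := hδbd i
        nlinarith [abs_nonneg ((δ : ℤ → ℝ) i), sq_abs ((δ : ℤ → ℝ) i)]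
      calc ‖R‖ ≤ ‖(5 * ‖δ‖) • δ‖ := norm_mono _ _ hRbd
        _ = |5 * ‖δ‖| * ‖δ‖ := by rw [norm_smul, Real.norm_eq_abs]
        _ = 5 * ‖δ‖ * ‖δ‖ := by rw [abs_of_nonneg (by positivity)]
    -- conclude HasFDerivAt
    rw [hasFDerivAt_iff_isLittleO_nhds_zero]
    rw [Asymptotics.isLittleO_iff]
    intro c hc
    have hball : ∀ᶠ h : lp (fun _ : ℤ => ℝ) 2 in nhds 0, ‖h‖ < c / 5 := by
      have := Metric.ball_mem_nhds (0 : lp (fun _ : ℤ => ℝ) 2) (by positivity : (0:ℝ) < c / 5)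
      filter_upwards [this] with h hh
      rwa [Metric.mem_ball, dist_zero_right] at hh
    filter_upwards [hball] with h hh
    have h1 := hkey (θb + h)
    have h2 : θb + h - θb = h := add_sub_cancel_left θb h
    rw [h2] at h1
    calc ‖F (θb + h, 0) - F (θb, 0)
          - (L : lp (fun _ : ℤ => ℝ) 2 →L[ℝ] lp (fun _ : ℤ => ℝ) 2) h‖
        ≤ 5 * ‖h‖ * ‖h‖ := h1
      _ ≤ c * ‖h‖ := by nlinarith [norm_nonneg h]
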